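/- Let g = sl(n+1,ℝ), π = Σ_{i<j} E_ij ∧ E_ji, and fix i < j. Then X = E_ij satisfies [X,[X,π]] = 0 in ∧³g. -/

import Mathlib

open ExteriorAlgebra

attribute [local instance 100] LieRing.ofAssociativeRing

/-- Auxiliary data packaging the Schouten bracket operations on the exterior algebra
`⋀• g` of a Lie algebra `g`, characterized by their values on decomposable elements:
* `bv X` is the Schouten bracket `[X, ·]` with an element of `g`, i.e. the unique
  derivation of `⋀• g` extending `ad X`;
* `sb` is the Schouten bracket `[·,·] : ⋀² g × ⋀² g → ⋀³ g`;
* `pair ξ η` is the pairing of `ξ ∧ η ∈ ⋀² g*` with `⋀² g`;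
* `sharp η ξ = ι_ξ η` is contraction of `η ∈ ⋀² g` with a covector `ξ`. -/
structure SchoutenData (R : Type*) [Field R] (L : Type*) [LieRing L] [LieAlgebra R L] where
  bv : L →ₗ[R] ExteriorAlgebra R L →ₗ[R] ExteriorAlgebra R L
  sb : ExteriorAlgebra R L →ₗ[R] ExteriorAlgebra R L →ₗ[R] ExteriorAlgebra R L
  pair : Module.Dual R L →ₗ[R] Module.Dual R L →ₗ[R] ExteriorAlgebra R L →ₗ[R] R
  sharp : ExteriorAlgebra R L →ₗ[R] Module.Dual R L →ₗ[R] L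
  bv_wedge2 : ∀ X u v : L, bv X (ιMulti R 2 ![u, v]) =
    ιMulti R 2 ![⁅X, u⁆, v] + ιMulti R 2 ![u, ⁅X, v⁆]
  bv_wedge3 : ∀ X u v t : L, bv X (ιMulti R 3 ![u, v, t]) =
    ιMulti R 3 ![⁅X, u⁆, v, t] + ιMulti R 3 ![u, ⁅X, v⁆, t] + ιMulti R 3 ![u, v, ⁅X, t⁆]
  sb_wedge : ∀ u v x y : L, sb (ιMulti R 2 ![u, v]) (ιMulti R 2 ![x, y]) =
    ιMulti R 3 ![⁅u, x⁆, v, y] + ιMulti R 3 ![u, ⁅v, x⁆, y]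
      - ιMulti R 3 ![x, ⁅u, y⁆, v] - ιMulti R 3 ![x, u, ⁅v, y⁆]
  pair_wedge : ∀ (ξ η : Module.Dual R L) (u v : L),
    pair ξ η (ιMulti R 2 ![u, v]) = ξ u * η v - ξ v * η u
  sharp_wedge : ∀ (u v : L) (ξ : Module.Dual R L),
    sharp (ιMulti R 2 ![u, v]) ξ = ξ u • v - ξ v • u

/-!
For `i ≠ j` the matrix `X = E_ij` squares to zero, so `ad_X² M = -2 X M X = -2 M_ji X`.
Since `[X, ·]` acts on `⋀² g` as a derivation,
`[X, [X, u ∧ v]] = ad_X² u ∧ v + 2 ad_X u ∧ ad_X v + u ∧ ad_X² v`.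
For `u = E_pq`, `v = E_qp` the outer terms vanish, since `ad_X² E_pq` is nonzero only when
`E_qp = X`; and for `p ≠ q` one of `ad_X E_pq`, `ad_X E_qp` is zero.
-/

section
variable {R M : Type*} [CommRing R] [AddCommGroup M] [Module R M]

theorem ιMulti_two (u v : M) : ιMulti R 2 ![u, v] = ι R u * ι R v := by
  simp [ιMulti_apply]

end

theorem Ring.lie_lie_of_mul_self_eq_zero {A : Type*} [Ring A] {X : A} (hX : X * X = 0) (u : A) :
    ⁅X, ⁅X, u⁆⁆ = -(2 • (X * u * X)) := by
  have hXXu : X * (X * u) = 0 := by rw [← mul_assoc, hX, zero_mul]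
  have huXX : u * X * X = 0 := by rw [mul_assoc, hX, mul_zero]
  rw [Ring.lie_def, Ring.lie_def, mul_sub, sub_mul, hXXu, huXX, ← mul_assoc]
  abel

namespace Matrix
variable {R n : Type*} [Fintype n] [DecidableEq n] {i j : n}

section Ring
variable [Ring R]

theorem lie_single_single_of_ne {p q : n} (hjp : j ≠ p) (hqi : q ≠ i) (a b : R) :
    ⁅single i j a, single p q b⁆ = 0 := by
  simp [Ring.lie_def, hjp, hqi]

theorem lie_single_lie_single (hij : i ≠ j) (M : Matrix n n R) :
    ⁅single i j (1 : R), ⁅single i j (1 : R), M⁆⁆ = -(2 • single i j (M j i)) := by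
  rw [Ring.lie_lie_of_mul_self_eq_zero (by simp [hij.symm]), single_mul_mul_single, one_mul,
    mul_one]

theorem lie_single_single_eq_zero_or (hij : i ≠ j) {p q : n} (hpq : p ≠ q) :
    ⁅single i j (1 : R), single p q (1 : R)⁆ = 0 ∨ ⁅single i j (1 : R), single q p (1 : R)⁆ = 0 := by
  by_cases hjp : j = p
  · subst hjp
    exact .inr (lie_single_single_of_ne hpq hij.symm _ _)
  by_cases hqi : q = i
  · subst hqi
    exact .inr (lie_single_single_of_ne hij.symm hpq _ _)
  exact .inl (lie_single_single_of_ne hjp hqi _ _)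

end Ring

theorem ι_lie_lie_single_mul_ι_single_eq_zero [CommRing R] (hij : i ≠ j) (p q : n) :
    ι R ⁅single i j (1 : R), ⁅single i j (1 : R), single p q (1 : R)⁆⁆ *
      ι R (single q p (1 : R)) = 0 := by
  rw [lie_single_lie_single hij, single_apply]
  split_ifs with h
  · obtain ⟨rfl, rfl⟩ := h
    rw [map_neg, map_nsmul, neg_mul, smul_mul_assoc, ι_sq_zero, smul_zero, neg_zero]
  · rw [single_zero, smul_zero, neg_zero, map_zero, zero_mul]

end Matrix

namespace SchoutenData
variable {R : Type*} [Field R]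

section
variable {L : Type*} [LieRing L] [LieAlgebra R L] (S : SchoutenData R L)

theorem bv_ι_mul_ι (X u v : L) :
    S.bv X (ι R u * ι R v) = ι R ⁅X, u⁆ * ι R v + ι R u * ι R ⁅X, v⁆ := by
  simpa [ιMulti_two] using S.bv_wedge2 X u v

theorem bv_bv_ι_mul_ι (X u v : L) :
    S.bv X (S.bv X (ι R u * ι R v)) =
      ι R ⁅X, ⁅X, u⁆⁆ * ι R v + 2 • (ι R ⁅X, u⁆ * ι R ⁅X, v⁆) + ι R u * ι R ⁅X, ⁅X, v⁆⁆ := by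
  rw [bv_ι_mul_ι, map_add, bv_ι_mul_ι, bv_ι_mul_ι]
  abel

end

open Matrix in
theorem bv_bv_ι_single_mul_ι_single_eq_zero {n : Type*} [Fintype n] [DecidableEq n]
    (S : SchoutenData R (Matrix n n R)) {i j p q : n} (hij : i ≠ j) (hpq : p ≠ q) :
    S.bv (single i j 1) (S.bv (single i j 1) (ι R (single p q (1 : R)) * ι R (single q p 1))) =
      0 := by
  have hmid : ι R ⁅single i j (1 : R), single p q (1 : R)⁆ *
      ι R ⁅single i j (1 : R), single q p (1 : R)⁆ = 0 := by
    rcases lie_single_single_eq_zero_or (R := R) hij hpq with h | h <;> simp [h]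
  have hright : ι R (single p q (1 : R)) *
      ι R ⁅single i j (1 : R), ⁅single i j (1 : R), single q p (1 : R)⁆⁆ = 0 := by
    rw [eq_neg_of_add_eq_zero_left (ι_add_mul_swap _ _),
      ι_lie_lie_single_mul_ι_single_eq_zero hij, neg_zero]
  rw [S.bv_bv_ι_mul_ι, ι_lie_lie_single_mul_ι_single_eq_zero hij, hmid, hright, smul_zero,
    add_zero, add_zero]

end SchoutenData

/-- In `g = sl(n+1,ℝ)` with `π = Σ_{p<q} E_pq ∧ E_qp ∈ ⋀²g`, for fixed
`i < j` the element `X = E_ij` satisfies `[X,[X,π]] = 0`. -/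
theorem bracket_Eij_bracket_Eij_pi_eq_zero (n : ℕ)
    (S : SchoutenData ℝ (Matrix (Fin (n + 1)) (Fin (n + 1)) ℝ))
    (i j : Fin (n + 1)) (hij : i < j) :
    letI E : Fin (n + 1) → Fin (n + 1) → Matrix (Fin (n + 1)) (Fin (n + 1)) ℝ :=
      fun p q => Matrix.single p q 1
    S.bv (E i j)
        (S.bv (E i j)
          (∑ p : Fin (n + 1), ∑ q : Fin (n + 1),
            if p < q then ιMulti ℝ 2 ![E p q, E q p] else 0)) = 0 := by
  simp only [map_sum]
  refine Finset.sum_eq_zero fun p _ => Finset.sum_eq_zero fun q _ => ?_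
  split_ifs with hpq
  · rw [ιMulti_two]
    exact S.bv_bv_ι_single_mul_ι_single_eq_zero hij.ne hpq.ne
  · simp only [map_zero]
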